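/- Let (X, ‖·‖) be a real normed linear space, T : X → X a mapping, k ∈ (0, ∞), h ∈ [0, 1), and set λ = 1/(k+1) ∈ (0, 1). Then T is a (k, h)-enriched Bianchini mapping (i.e., ‖k(x−y) + Tx − Ty‖ ≤ h·max{‖x − Tx‖, ‖y − Ty‖} for all x, y ∈ X) if and only if the averaged mapping T_λ(x) = (1−λ)x + λT(x) is a Bianchini mapping with constant h, i.e., ‖T_λx − T_λy‖ ≤ h·max{‖x − T_λx‖, ‖y − T_λy‖} for all x, y ∈ X. -/

import Mathlib

section Bianchini

variable {X : Type*} [SeminormedAddCommGroup X] [NormedSpace ℝ X]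

def IsBianchini (h : ℝ) (S : X → X) : Prop :=
  ∀ x y, ‖S x - S y‖ ≤ h * max ‖x - S x‖ ‖y - S y‖

def IsEnrichedBianchini (k h : ℝ) (T : X → X) : Prop :=
  ∀ x y, ‖k • (x - y) + (T x - T y)‖ ≤ h * max ‖x - T x‖ ‖y - T y‖

def averagedMap (t : ℝ) (T : X → X) (x : X) : X :=
  (1 - t) • x + t • T x

theorem sub_averagedMap (t : ℝ) (T : X → X) (x : X) :
    x - averagedMap t T x = t • (x - T x) := by
  unfold averagedMap
  module

theorem averagedMap_sub_averagedMap {t k : ℝ} (htk : t * k = 1 - t) (T : X → X) (x y : X) :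
    averagedMap t T x - averagedMap t T y = t • (k • (x - y) + (T x - T y)) := by
  unfold averagedMap
  rw [smul_add, smul_smul, htk]
  module

theorem isBianchini_averagedMap_iff {t k : ℝ} (ht : 0 < t) (htk : t * k = 1 - t) (h : ℝ)
    (T : X → X) : IsBianchini h (averagedMap t T) ↔ IsEnrichedBianchini k h T := by
  refine forall₂_congr fun x y => ?_
  rw [averagedMap_sub_averagedMap htk, sub_averagedMap, sub_averagedMap, norm_smul, norm_smul,
    norm_smul, Real.norm_of_nonneg ht.le, ← mul_max_of_nonneg _ _ ht.le, mul_left_comm]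
  exact mul_le_mul_iff_right₀ ht

end Bianchini

theorem enrichedBianchini_iff_averaged_bianchini_general
    {X : Type*} [NormedAddCommGroup X] [NormedSpace ℝ X]
    (T : X → X) (k h : ℝ) (hk : 0 < k) :
    (∀ x y : X, ‖k • (x - y) + (T x - T y)‖ ≤ h * max ‖x - T x‖ ‖y - T y‖) ↔
      (∀ x y : X,
        ‖((1 - 1 / (k + 1)) • x + (1 / (k + 1)) • T x) -
            ((1 - 1 / (k + 1)) • y + (1 / (k + 1)) • T y)‖ ≤
          h * max ‖x - ((1 - 1 / (k + 1)) • x + (1 / (k + 1)) • T x)‖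
                  ‖y - ((1 - 1 / (k + 1)) • y + (1 / (k + 1)) • T y)‖) := by
  have hk1 : k + 1 ≠ 0 := by positivity
  have htk : 1 / (k + 1) * k = 1 - 1 / (k + 1) := by
    field_simp
    ring
  exact (isBianchini_averagedMap_iff (by positivity) htk h T).symm

/-- `T` is a `(k, h)`-enriched Bianchini mapping iff the averaged mapping
`T_λ`, `λ = 1/(k+1)`, is a Bianchini mapping with constant `h`. -/
theorem enrichedBianchini_iff_averaged_bianchini
    {X : Type*} [NormedAddCommGroup X] [NormedSpace ℝ X]
    (T : X → X) (k h : ℝ) (hk : 0 < k) (hh0 : 0 ≤ h) (hh : h < 1) :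
    (∀ x y : X, ‖k • (x - y) + (T x - T y)‖ ≤ h * max ‖x - T x‖ ‖y - T y‖) ↔
      (∀ x y : X,
        ‖((1 - 1 / (k + 1)) • x + (1 / (k + 1)) • T x) -
            ((1 - 1 / (k + 1)) • y + (1 / (k + 1)) • T y)‖ ≤
          h * max ‖x - ((1 - 1 / (k + 1)) • x + (1 / (k + 1)) • T x)‖
                  ‖y - ((1 - 1 / (k + 1)) • y + (1 / (k + 1)) • T y)‖) :=
  enrichedBianchini_iff_averaged_bianchini_general T k h hk
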